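/- Let A = KQ/I be a Brauer graph algebra of a Brauer graph G, v a non-truncated vertex of G of multiplicity e_v, and γ = γ₁…γ_m the cycle of Q generated by v with s(γ₁) = x, where x is a non-truncated edge. Then the word γ^{e_v - 1}γ₁…γ_{m-1} is a direct string that ends in a deep, and it is the maximal direct string starting at x around v. -/

import Mathlib

/-!
A Brauer graph with multiplicities is encoded as a combinatorial map on a finite set
`H` of half-edges: `sigma` is the fixed-point-free involution pairing the two
half-edges of each edge, `rho` is the permutation whose cycles are the cyclic
orderings of half-edges around vertices, and `mult` is the multiplicity function
(constant on vertices, i.e. on `rho`-orbits).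

The quiver `Q` of the Brauer graph algebra has the edges of `G` (the
`sigma`-orbits) as vertices; for every half-edge `x` at a non-truncated vertex
there is an arrow from the edge of `x` to the edge of `rho x`, and these are all
the arrows.  We identify arrows with such half-edges.  Words in the double quiver
are lists of letters `(true, x)` (the arrow `x`) and `(false, x)` (its formal
inverse), and the string conditions coming from the relations of the Brauer graph
algebra are encoded below.
-/

structure BrauerGraphData (H : Type) where
  sigma : Equiv.Perm H
  rho : Equiv.Perm H
  invol : ∀ x, sigma (sigma x) = x
  noFix : ∀ x, sigma x ≠ x
  conn : ∀ x y, Relation.EqvGen (fun a b => sigma a = b ∨ rho a = b) x y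
  mult : H → ℕ
  multPos : ∀ x, 1 ≤ mult x
  multConst : ∀ x, mult (rho x) = mult x

namespace BrauerGraphData

variable {H : Type}

/-- The half-edge `x` sits at a truncated vertex (valency one, multiplicity one). -/
def TruncVert (G : BrauerGraphData H) (x : H) : Prop := G.rho x = x ∧ G.mult x = 1

/-- The half-edge `x` is an arrow of the quiver of the Brauer graph algebra. -/
def IsArrow (G : BrauerGraphData H) (x : H) : Prop := ¬ G.TruncVert x

/-- The edge of the half-edge `x` is truncated. -/
def TruncEdge (G : BrauerGraphData H) (x : H) : Prop :=
  G.TruncVert x ∨ G.TruncVert (G.sigma x)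

/-- The length of the cycle of `Q` generated by the vertex of `x` (the valency). -/
noncomputable def cyclen (G : BrauerGraphData H) (x : H) : ℕ :=
  Function.minimalPeriod (⇑G.rho) x

/-- Admissible consecutive pairs of letters in a string of a Brauer graph algebra:
two consecutive arrows (or two consecutive inverses) must be consecutive on a
vertex cycle, and at a change of direction the word must pass from one half-edge of
the meeting edge to the other. -/
def lok (G : BrauerGraphData H) : Bool × H → Bool × H → Prop
  | (true, x), (true, y) => y = G.rho x
  | (false, x), (false, y) => x = G.rho y
  | (true, x), (false, y) => G.sigma (G.rho x) = G.rho y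
  | (false, x), (true, y) => G.sigma x = y

/-- The direct word of length `k` along the vertex cycle starting at the arrow `x`. -/
def dirRun (G : BrauerGraphData H) (x : H) (k : ℕ) : List (Bool × H) :=
  (List.range k).map (fun i => (true, (⇑G.rho)^[i] x))

/-- The inverse word of length `k`: the formal inverse of the direct word of length
`k` along the vertex cycle starting at the arrow `x`. -/
def invRun (G : BrauerGraphData H) (x : H) (k : ℕ) : List (Bool × H) :=
  ((List.range k).map (fun i => ((false : Bool), (⇑G.rho)^[i] x))).reverse

/-- `w` is a (nonempty) string of the Brauer graph algebra: all its letters are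
arrows, consecutive letters are admissible, and it contains no direct or inverse
run of length `mult x * cyclen x` (such runs lie in the relation ideal). -/
def IsString (G : BrauerGraphData H) (w : List (Bool × H)) : Prop :=
  w ≠ [] ∧ (∀ l ∈ w, G.IsArrow l.2) ∧ w.Chain' G.lok ∧
    (¬ ∃ x : H, (G.dirRun x (G.mult x * G.cyclen x)).IsInfix w) ∧
    (¬ ∃ x : H, (G.invRun x (G.mult x * G.cyclen x)).IsInfix w)

/-- `w` ends in a deep: no arrow can be added at the end of `w`. -/
def EndsInDeep (G : BrauerGraphData H) (w : List (Bool × H)) : Prop :=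
  ¬ ∃ y : H, G.IsString (w ++ [(true, y)])

/-- `w` ends on a peak: no formal inverse can be added at the end of `w`. -/
def EndsOnPeak (G : BrauerGraphData H) (w : List (Bool × H)) : Prop :=
  ¬ ∃ y : H, G.IsString (w ++ [((false : Bool), y)])

end BrauerGraphData

open BrauerGraphData

/-!
In a direct string each arrow is the `ρ`-successor of the previous one, so the direct strings
starting at `z` are the runs `z, ρ z, ρ² z, …`. Every half-edge on such a run has the
multiplicity and valency of `z`, so a run shorter than `mult z * cyclen z` contains no relation
`γ^{e}`, while the run of exactly that length is one. Hence the run of length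
`mult z * cyclen z - 1` is a string, and appending any arrow to it completes the relation.
-/

namespace BrauerGraphData

variable {H : Type} (G : BrauerGraphData H)

lemma mult_iterate_rho (z : H) (i : ℕ) : G.mult ((⇑G.rho)^[i] z) = G.mult z := by
  induction i with
  | zero => rfl
  | succ i ih => rw [Function.iterate_succ_apply', G.multConst, ih]

lemma dirRun_length (z : H) (k : ℕ) : (G.dirRun z k).length = k := by
  simp [dirRun]

lemma dirRun_succ (z : H) (k : ℕ) :
    G.dirRun z (k + 1) = G.dirRun z k ++ [(true, (⇑G.rho)^[k] z)] := by
  simp [dirRun, List.range_succ]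

lemma mem_dirRun {z : H} {k : ℕ} {a : Bool × H} :
    a ∈ G.dirRun z k ↔ ∃ i < k, (true, (⇑G.rho)^[i] z) = a := by
  simp [dirRun]

lemma dirRun_prefix_of_le (z : H) {m k : ℕ} (h : m ≤ k) : G.dirRun z m <+: G.dirRun z k := by
  obtain ⟨n, rfl⟩ := Nat.exists_eq_add_of_le h
  simp only [dirRun, List.range_add, List.map_append]
  exact List.prefix_append _ _

lemma isChain_dirRun (z : H) (k : ℕ) : (G.dirRun z k).IsChain G.lok :=
  (List.isChain_map _).2 <|
    (List.isChain_range _ _).2 fun i _ => Function.iterate_succ_apply' G.rho i z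

lemma append_eq_dirRun_succ_of_isChain {z y : H} {k : ℕ} (hk : 0 < k)
    (h : (G.dirRun z k ++ [(true, y)]).IsChain G.lok) :
    G.dirRun z k ++ [(true, y)] = G.dirRun z (k + 1) := by
  obtain ⟨j, rfl⟩ : ∃ j, k = j + 1 := ⟨k - 1, by omega⟩
  rw [dirRun_succ, List.append_assoc, List.singleton_append,
    List.isChain_append_cons_cons] at h
  have hy : y = G.rho ((⇑G.rho)^[j] z) := h.2.1
  rw [G.dirRun_succ z (j + 1), hy, Function.iterate_succ_apply']

lemma not_isString_dirRun_of_le (z : H) {k : ℕ} (h : G.mult z * G.cyclen z ≤ k) :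
    ¬ G.IsString (G.dirRun z k) :=
  fun hs => hs.2.2.2.1 ⟨z, (G.dirRun_prefix_of_le z h).isInfix⟩

lemma endsInDeep_dirRun {z : H} {k : ℕ} (hk : 0 < k) (hkN : G.mult z * G.cyclen z ≤ k + 1) :
    G.EndsInDeep (G.dirRun z k) := by
  rintro ⟨y, hs⟩
  rw [G.append_eq_dirRun_succ_of_isChain hk hs.2.2.1] at hs
  exact G.not_isString_dirRun_of_le z hkN hs

lemma truncVert_iff_cyclen_eq_one (z : H) : G.TruncVert z ↔ G.cyclen z = 1 ∧ G.mult z = 1 := by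
  rw [cyclen, Function.minimalPeriod_eq_one_iff_isFixedPt]
  rfl

section Finite

variable [Finite H]

lemma cyclen_pos (z : H) : 0 < G.cyclen z :=
  Function.minimalPeriod_pos_of_mem_periodicPts (G.rho.injective.mem_periodicPts z)

lemma cyclen_iterate_rho (z : H) (i : ℕ) : G.cyclen ((⇑G.rho)^[i] z) = G.cyclen z :=
  Function.minimalPeriod_apply_iterate (G.rho.injective.mem_periodicPts z) i

lemma isArrow_iterate_rho {z : H} (hz : G.IsArrow z) (i : ℕ) : G.IsArrow ((⇑G.rho)^[i] z) := by
  simpa only [IsArrow, truncVert_iff_cyclen_eq_one, cyclen_iterate_rho, mult_iterate_rho]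
    using hz

lemma two_le_mult_mul_cyclen {z : H} (hz : G.IsArrow z) : 2 ≤ G.mult z * G.cyclen z := by
  rw [IsArrow, truncVert_iff_cyclen_eq_one] at hz
  have hm := G.multPos z
  have hc := G.cyclen_pos z
  by_cases hc1 : G.cyclen z = 1
  · have : G.mult z ≠ 1 := fun h => hz ⟨hc1, h⟩
    rw [hc1]
    omega
  · exact (show 2 ≤ G.cyclen z by omega).trans (Nat.le_mul_of_pos_left _ hm)

lemma isString_dirRun {z : H} (hz : G.IsArrow z) {k : ℕ} (hk : 0 < k)
    (hkN : k < G.mult z * G.cyclen z) : G.IsString (G.dirRun z k) := by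
  refine ⟨?_, ?_, G.isChain_dirRun z k, ?_, ?_⟩
  · rw [← List.length_pos_iff, dirRun_length]
    exact hk
  · intro a ha
    obtain ⟨i, -, rfl⟩ := G.mem_dirRun.1 ha
    exact G.isArrow_iterate_rho hz i
  · rintro ⟨y, hy⟩
    have hy0 : ((true : Bool), y) ∈ G.dirRun z k := hy.subset <| G.mem_dirRun.2
      ⟨0, Nat.mul_pos (G.multPos y) (G.cyclen_pos y), rfl⟩
    obtain ⟨i, -, hi⟩ := G.mem_dirRun.1 hy0
    have hlen := hy.length_le
    rw [dirRun_length, dirRun_length, ← (Prod.mk.inj hi).2, mult_iterate_rho,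
      cyclen_iterate_rho] at hlen
    omega
  · rintro ⟨y, hy⟩
    have hy0 : ((false : Bool), y) ∈ G.dirRun z k := hy.subset <| by
      simpa [invRun] using ⟨0, Nat.mul_pos (G.multPos y) (G.cyclen_pos y), rfl⟩
    obtain ⟨i, -, hi⟩ := G.mem_dirRun.1 hy0
    simp at hi

end Finite

end BrauerGraphData

theorem maximal_direct_string_ends_in_deep_general
    (H : Type) [Fintype H] (G : BrauerGraphData H) (z : H)
    (hv : G.IsArrow z) :
    G.IsString (G.dirRun z (G.mult z * G.cyclen z - 1)) ∧
      G.EndsInDeep (G.dirRun z (G.mult z * G.cyclen z - 1)) ∧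
      ∀ k : ℕ, G.IsString (G.dirRun z k) → k ≤ G.mult z * G.cyclen z - 1 := by
  have hN := G.two_le_mult_mul_cyclen hv
  refine ⟨G.isString_dirRun hv (by omega) (by omega), G.endsInDeep_dirRun (by omega) (by omega),
    fun k hk => ?_⟩
  by_contra hlt
  exact G.not_isString_dirRun_of_le z (by omega) hk

/-- Let `A = KQ/I` be the Brauer graph algebra of a Brauer graph
`G`, let `v` be a non-truncated vertex of `G` of multiplicity `e_v` and let
`γ = γ₁…γ_m` be the cycle of `Q` generated by `v` with `s(γ₁) = x` a non-truncated
edge.  Identifying `γ₁` with a half-edge `z` of `x` at `v` (so `γ_{i+1} = ρ γ_i` and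
`m = cyclen z`, `e_v = mult z`), the word `γ^{e_v − 1} γ₁ … γ_{m−1}` — the direct
run of length `e_v * m − 1` starting at `z` — is a direct string ending in a deep,
and it is the maximal direct string starting at `x` around `v`. -/
theorem maximal_direct_string_ends_in_deep
    (H : Type) [Fintype H] (G : BrauerGraphData H) (z : H)
    (hv : G.IsArrow z) (hx : ¬ G.TruncEdge z) :
    G.IsString (G.dirRun z (G.mult z * G.cyclen z - 1)) ∧
      G.EndsInDeep (G.dirRun z (G.mult z * G.cyclen z - 1)) ∧
      ∀ k : ℕ, G.IsString (G.dirRun z k) → k ≤ G.mult z * G.cyclen z - 1 :=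
  maximal_direct_string_ends_in_deep_general H G z hv
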